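/- Let a, b, c be pairwise coprime positive integers and let F = F(a, b, c) be the Frobenius number of (a, b, c). Suppose F = x·b + y·c for some positive integers x, y, and suppose moreover that x·b = u·a + v·c for some positive integers u, v (so x·b is N-representable by (a, c)). Then x·b is the smallest multiple of b that is N-representable by (a, c); that is, for every positive integer m such that m·b is N-representable by (a, c), one has x ≤ m. -/

import Mathlib

/-- `n` is N-representable by `(a, b)`: `n = x*a + y*b` with `x, y` positive. -/
def Rep2 (a b n : ℕ) : Prop := ∃ x y : ℕ, 0 < x ∧ 0 < y ∧ n = x * a + y * b

/-- `n` is N-representable by `(a, b, c)`. -/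
def Rep3 (a b c n : ℕ) : Prop :=
  ∃ x y z : ℕ, 0 < x ∧ 0 < y ∧ 0 < z ∧ n = x * a + y * b + z * c

/-! If `m < x` and `m * b = p * a + q * c` with `p, q > 0`, then
`F = p * a + (x - m) * b + (q + y) * c` would be N-representable by `(a, b, c)`. -/

theorem Rep2.add_mul_right {a b n : ℕ} (h : Rep2 a b n) (k : ℕ) : Rep2 a b (n + k * b) := by
  obtain ⟨p, q, hp, hq, rfl⟩ := h
  exact ⟨p, q + k, hp, by omega, by ring⟩

theorem Rep2.rep3_add_mul {a b c n : ℕ} (h : Rep2 a c n) {k : ℕ} (hk : 0 < k) :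
    Rep3 a b c (n + k * b) := by
  obtain ⟨p, q, hp, hq, rfl⟩ := h
  exact ⟨p, k, q, hp, hk, hq, by ring⟩

theorem least_multiple_representable_general
    (a b c F : ℕ)
    (hFnotrep : ¬ Rep3 a b c F)
    (x y : ℕ) (hF : F = x * b + y * c) :
    ∀ m : ℕ, 0 < m → Rep2 a c (m * b) → x ≤ m := by
  intro m _ hm
  by_contra! hlt
  obtain ⟨k, rfl⟩ := Nat.exists_eq_add_of_lt hlt
  have hsplit : F = (m * b + y * c) + (k + 1) * b := by rw [hF]; ring
  exact hFnotrep (hsplit ▸ (hm.add_mul_right y).rep3_add_mul k.succ_pos)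

theorem least_multiple_representable
    (a b c F : ℕ) (ha : 0 < a) (hb : 0 < b) (hc : 0 < c)
    (hab : Nat.Coprime a b) (hac : Nat.Coprime a c) (hbc : Nat.Coprime b c)
    (hFnotrep : ¬ Rep3 a b c F)
    (hFmax : ∀ n : ℕ, F < n → Rep3 a b c n)
    (x y : ℕ) (hx : 0 < x) (hy : 0 < y) (hF : F = x * b + y * c)
    (u v : ℕ) (hu : 0 < u) (hv : 0 < v) (hxb : x * b = u * a + v * c) :
    ∀ m : ℕ, 0 < m → Rep2 a c (m * b) → x ≤ m :=
  least_multiple_representable_general a b c F hFnotrep x y hF
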